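/- Fix α and r with 0 < α < 1 < r. Then the function p ↦ Θ_p{α, r} is monotone increasing on (-∞, -1]: for all p₁ ≤ p₂ ≤ -1, one has Θ_{p₁}{α, r} ≤ Θ_{p₂}{α, r}. -/

import Mathlib

open Real Filter

/-- `F_p(s, α, r) = ((1 - s^{2p})/(1 - r^{2p}))(r² + α²)
  + ((s^{2p} - r^{2p})/(1 - r^{2p}))(1 + α² r²) - s² - α² r² s⁻²`. -/
noncomputable def Fp (p α r s : ℝ) : ℝ :=
  (1 - s ^ (2 * p)) / (1 - r ^ (2 * p)) * (r ^ 2 + α ^ 2) +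
  (s ^ (2 * p) - r ^ (2 * p)) / (1 - r ^ (2 * p)) * (1 + α ^ 2 * r ^ 2) -
  s ^ 2 - α ^ 2 * r ^ 2 * s ^ (-2 : ℝ)

/-- The period function `Θ_p{α, r} = ∫_1^r ds / √(F_p(s, α, r))`. -/
noncomputable def Theta (p α r : ℝ) : ℝ :=
  ∫ s in (1 : ℝ)..r, (Real.sqrt (Fp p α r s))⁻¹

/-!
Splitting off the terms that do not involve `p`,
`F_p(s) = x_p(s) (r² - 1)(1 - α²) + (1 + α² r² - s² - α² r² s⁻²)` with
`x_p(s) = (1 - s^{2p}) / (1 - r^{2p})`. Writing `s = r^θ` with `θ = log s / log r ∈ [0, 1]`,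
`x_p(s)` is the slope of the chord of the concave function `t ↦ t^θ` between `t = r^{2p}` and
`t = 1`; it decreases as `r^{2p}` increases, so `F_p(s)` decreases in `p < 0` and the integrand
`F_p(s)^{-1/2}` of `Θ_p` increases. For `p ≤ -1` the integrands are dominated by that of
`p = -1`, where `F_{-1}(s) = (s² - 1)(r² - s²) / s²` and `s / √((s² - 1)(r² - s²))` has an
explicit antiderivative, so all of them are integrable.
-/

open Set MeasureTheory

lemma antitoneOn_one_sub_rpow_div_one_sub {θ : ℝ} (hθ₀ : 0 ≤ θ) (hθ₁ : θ ≤ 1) :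
    AntitoneOn (fun x : ℝ => (1 - x ^ θ) / (1 - x)) (Ici 0 \ {1}) := by
  rintro x ⟨hx, hx1⟩ y ⟨hy, hy1⟩ hxy
  have h := (Real.concaveOn_rpow hθ₀ hθ₁).neg.secant_mono (a := 1) (mem_Ici.2 zero_le_one)
    hx hy hx1 hy1 hxy
  have slope (z : ℝ) : (-z ^ θ - -1 ^ θ) / (z - 1) = -((1 - z ^ θ) / (1 - z)) := by
    rw [Real.one_rpow, ← neg_sub 1 z, div_neg]; ring
  simp only [Pi.neg_apply, slope, neg_le_neg_iff] at h
  exact h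

lemma antitoneOn_one_sub_rpow_div_one_sub_rpow {r s : ℝ} (hr : 1 < r) (hs : 1 ≤ s)
    (hsr : s ≤ r) :
    AntitoneOn (fun p : ℝ => (1 - s ^ (2 * p)) / (1 - r ^ (2 * p))) (Iio 0) := by
  have hlogr : 0 < log r := log_pos hr
  set θ := log s / log r
  have hpow (p : ℝ) : s ^ (2 * p) = (r ^ (2 * p)) ^ θ := by
    rw [← rpow_mul (by linarith), rpow_def_of_pos (by linarith), rpow_def_of_pos (by linarith)]
    congr 1
    simp only [θ]
    field_simp
  have hθ₀ : 0 ≤ θ := div_nonneg (log_nonneg hs) hlogr.le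
  have hθ₁ : θ ≤ 1 := (div_le_one hlogr).2 (log_le_log (by linarith) hsr)
  have hmem {p : ℝ} (hp : p < 0) : r ^ (2 * p) ∈ Ici 0 \ {1} :=
    ⟨(rpow_pos_of_pos (by linarith) _).le, (rpow_lt_one_of_one_lt_of_neg hr (by linarith)).ne⟩
  intro p₁ hp₁ p₂ hp₂ hp
  simp only [hpow]
  exact antitoneOn_one_sub_rpow_div_one_sub hθ₀ hθ₁ (hmem hp₁) (hmem hp₂)
    (rpow_le_rpow_of_exponent_le hr.le (by linarith))

lemma Fp_eq {p α r : ℝ} (s : ℝ) (hr : 1 - r ^ (2 * p) ≠ 0) :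
    Fp p α r s = (1 - s ^ (2 * p)) / (1 - r ^ (2 * p)) * ((r ^ 2 - 1) * (1 - α ^ 2)) +
      (1 + α ^ 2 * r ^ 2 - s ^ 2 - α ^ 2 * r ^ 2 * s ^ (-2 : ℝ)) := by
  unfold Fp
  field_simp
  ring

lemma measurable_Fp (p α r : ℝ) : Measurable (Fp p α r) := by
  unfold Fp
  fun_prop

lemma antitoneOn_Fp {α r s : ℝ} (hα : α ^ 2 ≤ 1) (hr : 1 < r) (hs : 1 ≤ s) (hsr : s ≤ r) :
    AntitoneOn (fun p => Fp p α r s) (Iio 0) := by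
  intro p₁ hp₁ p₂ hp₂ hp
  have hne {p : ℝ} (hp : p ∈ Iio 0) : 1 - r ^ (2 * p) ≠ 0 :=
    (sub_pos.2 (rpow_lt_one_of_one_lt_of_neg hr (by linarith [mem_Iio.1 hp]))).ne'
  have hc : 0 ≤ (r ^ 2 - 1) * (1 - α ^ 2) := mul_nonneg (by nlinarith) (by linarith)
  simp only [Fp_eq s (hne hp₁), Fp_eq s (hne hp₂)]
  gcongr ?_ * _ + _
  exact antitoneOn_one_sub_rpow_div_one_sub_rpow hr hs hsr hp₁ hp₂ hp

lemma Fp_neg_one (α : ℝ) {r s : ℝ} (hr : 1 < r) (hs : 0 < s) :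
    Fp (-1) α r s = (s ^ 2 - 1) * (r ^ 2 - s ^ 2) / s ^ 2 := by
  have hr₀ : 0 < r := by linarith
  have hr₁ : 1 - (r ^ 2)⁻¹ ≠ 0 := (sub_pos.2 (inv_lt_one_of_one_lt₀ (by nlinarith))).ne'
  have hr₂ : r ^ 2 - 1 ≠ 0 := by nlinarith
  unfold Fp
  simp only [show (2 : ℝ) * -1 = -2 by norm_num, rpow_neg hs.le, rpow_neg hr₀.le, rpow_two]
  field_simp
  ring

lemma Fp_neg_one_pos (α : ℝ) {r s : ℝ} (hs : 1 < s) (hsr : s < r) : 0 < Fp (-1) α r s := by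
  rw [Fp_neg_one α (hs.trans hsr) (by linarith)]
  exact div_pos (mul_pos (by nlinarith) (by nlinarith)) (by positivity)

-- The substitution `t = s²` turns the derivative into `1 / (2 √((t - 1)(r² - t)))`.
lemma hasDerivAt_arcsin_div_two {r s : ℝ} (hs : 1 < s) (hsr : s < r) :
    HasDerivAt (fun x => arcsin ((2 * x ^ 2 - (r ^ 2 + 1)) / (r ^ 2 - 1)) / 2)
      (s / √((s ^ 2 - 1) * (r ^ 2 - s ^ 2))) s := by
  have hr : 0 < r ^ 2 - 1 := by nlinarith
  have hX : 0 < (s ^ 2 - 1) * (r ^ 2 - s ^ 2) := mul_pos (by nlinarith) (by nlinarith)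
  set u := (2 * s ^ 2 - (r ^ 2 + 1)) / (r ^ 2 - 1)
  have hu₁ : u < 1 := by rw [div_lt_one hr]; nlinarith
  have hu₀ : -1 < u := by rw [lt_div_iff₀ hr]; nlinarith
  have hsqrt : √(1 - u ^ 2) = 2 * √((s ^ 2 - 1) * (r ^ 2 - s ^ 2)) / (r ^ 2 - 1) := by
    rw [sqrt_eq_iff_mul_self_eq_of_pos (by positivity)]
    field_simp
    rw [sq_sqrt hX.le]
    simp only [u]
    field_simp
    ring
  have hinner : HasDerivAt (fun x => (2 * x ^ 2 - (r ^ 2 + 1)) / (r ^ 2 - 1))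
      (2 * (2 * s) / (r ^ 2 - 1)) s := by
    simpa using (((hasDerivAt_pow 2 s).const_mul 2).sub_const (r ^ 2 + 1)).div_const (r ^ 2 - 1)
  refine (((hasDerivAt_arcsin hu₀.ne' hu₁.ne).comp s hinner).div_const 2).congr_deriv ?_
  rw [hsqrt]
  field_simp

lemma integrableOn_inv_sqrt_Fp_neg_one (α : ℝ) {r : ℝ} (hr : 1 < r) :
    IntegrableOn (fun s => (√(Fp (-1) α r s))⁻¹) (Ioo 1 r) := by
  have heq : EqOn (fun s => s / √((s ^ 2 - 1) * (r ^ 2 - s ^ 2)))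
      (fun s => (√(Fp (-1) α r s))⁻¹) (Ioo 1 r) := by
    rintro s ⟨hs, -⟩
    have hs₀ : 0 < s := by linarith
    dsimp only
    rw [Fp_neg_one α hr hs₀, sqrt_div' _ (sq_nonneg s), sqrt_sq hs₀.le, inv_div]
  refine ((intervalIntegral.integrableOn_deriv_of_nonneg ?_ (fun s hs =>
    hasDerivAt_arcsin_div_two hs.1 hs.2) fun s hs => ?_).mono_set Ioo_subset_Ioc_self).congr_fun
    heq measurableSet_Ioo
  · fun_prop
  · exact div_nonneg (by linarith [hs.1]) (sqrt_nonneg _)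

section Comparison

variable {k f g : ℝ → ℝ} {a b : ℝ}

lemma integrableOn_inv_sqrt_of_le (hk : IntegrableOn (fun s => (√(k s))⁻¹) (Ioo a b))
    (hf : Measurable f) (hk₀ : ∀ s ∈ Ioo a b, 0 < k s) (hkf : ∀ s ∈ Ioo a b, k s ≤ f s) :
    IntegrableOn (fun s => (√(f s))⁻¹) (Ioo a b) := by
  refine hk.mono' hf.sqrt.inv.aestronglyMeasurable ?_
  refine (ae_restrict_iff' measurableSet_Ioo).2 (ae_of_all _ fun s hs => ?_)
  rw [norm_of_nonneg (inv_nonneg.2 (sqrt_nonneg _))]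
  gcongr
  exacts [sqrt_pos.2 (hk₀ s hs), hkf s hs]

lemma integral_inv_sqrt_le_of_le (hab : a ≤ b)
    (hk : IntegrableOn (fun s => (√(k s))⁻¹) (Ioo a b)) (hf : Measurable f) (hg : Measurable g)
    (hk₀ : ∀ s ∈ Ioo a b, 0 < k s) (hkf : ∀ s ∈ Ioo a b, k s ≤ f s)
    (hfg : ∀ s ∈ Ioo a b, f s ≤ g s) :
    ∫ s in a..b, (√(g s))⁻¹ ≤ ∫ s in a..b, (√(f s))⁻¹ := by
  have hkg (s : ℝ) (hs : s ∈ Ioo a b) : k s ≤ g s := (hkf s hs).trans (hfg s hs)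
  refine intervalIntegral.integral_mono_on_of_le_Ioo hab ?_ ?_ fun s hs => ?_
  · exact (intervalIntegrable_iff_integrableOn_Ioo_of_le hab).2
      (integrableOn_inv_sqrt_of_le hk hg hk₀ hkg)
  · exact (intervalIntegrable_iff_integrableOn_Ioo_of_le hab).2
      (integrableOn_inv_sqrt_of_le hk hf hk₀ hkf)
  · gcongr
    exacts [sqrt_pos.2 ((hk₀ s hs).trans_le (hkf s hs)), hfg s hs]

end Comparison

theorem stmt_14 (α r : ℝ) (hα₀ : 0 < α) (hα₁ : α < 1) (hr : 1 < r)
    (p₁ p₂ : ℝ) (h₁₂ : p₁ ≤ p₂) (h₂ : p₂ ≤ -1) :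
    Theta p₁ α r ≤ Theta p₂ α r := by
  have hα : α ^ 2 ≤ 1 := by nlinarith
  have hanti (s : ℝ) (hs : s ∈ Ioo 1 r) := antitoneOn_Fp hα hr hs.1.le hs.2.le
  have hp₂ : p₂ ∈ Iio 0 := by simp only [mem_Iio]; linarith
  unfold Theta
  exact integral_inv_sqrt_le_of_le hr.le (integrableOn_inv_sqrt_Fp_neg_one α hr)
    (measurable_Fp p₂ α r) (measurable_Fp p₁ α r) (fun s hs => Fp_neg_one_pos α hs.1 hs.2)
    (fun s hs => hanti s hs hp₂ (by norm_num) h₂)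
    (fun s hs => hanti s hs (by simp only [mem_Iio]; linarith) hp₂ h₁₂)
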